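/- arXiv:2412.17742 — 3 statements merged into one kernel-verified Lean document; each statement's English description precedes it below -/
import Mathlib

section
/- Let n ∈ ℕ, let A ∈ ℂ^{n×n} be symmetric, let γ ∈ ℂ^n and c ∈ ℂ^n. Write diag(c) for the diagonal matrix with entries c. Then lhaf(diag(c)·A·diag(c), diag(c)·γ) = (Π_{i=1}^n c_i) · lhaf(A, γ). -/
open Matrix

noncomputable section

/-- The loop Hafnian of a matrix `B`: the sum over all involutions `σ` of `{0,…,d-1}`
of the product over `i ≤ σ i` of `B i (σ i)`. -/
def lhaf {d : ℕ} (B : Matrix (Fin d) (Fin d) ℂ) : ℂ :=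
  ∑ σ ∈ Finset.univ.filter (fun σ : Equiv.Perm (Fin d) => σ * σ = 1),
    ∏ i ∈ Finset.univ.filter (fun i => i ≤ σ i), B i (σ i)

/-- `filldiag A γ` is `A` with its diagonal overwritten by the entries of `γ`. -/
def filldiag {d : ℕ} (A : Matrix (Fin d) (Fin d) ℂ) (γ : Fin d → ℂ) :
    Matrix (Fin d) (Fin d) ℂ :=
  Matrix.of fun i j => if i = j then γ i else A i j

/-- `lhaf(A, γ) := lhaf(filldiag(A, γ))`. -/
def lhafv {d : ℕ} (A : Matrix (Fin d) (Fin d) ℂ) (γ : Fin d → ℂ) : ℂ :=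
  lhaf (filldiag A γ)

/-- Scaling property of the loop Hafnian:
`lhaf(diag(c)·A·diag(c), diag(c)·γ) = (Π_i c_i) · lhaf(A, γ)`. -/
theorem lhaf_scaling (n : ℕ) (A : Matrix (Fin n) (Fin n) ℂ) (hA : A.IsSymm)
    (γ c : Fin n → ℂ) :
    lhafv (Matrix.diagonal c * A * Matrix.diagonal c)
        ((Matrix.diagonal c).mulVec γ)
      = (∏ i, c i) * lhafv A γ := by
  unfold lhafv lhaf
  rw [Finset.mul_sum]
  apply Finset.sum_congr rfl
  intro σ hσ
  rw [Finset.mem_filter] at hσ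
  have hinv : ∀ i, σ (σ i) = i := by
    intro i
    have : (σ * σ) i = (1 : Equiv.Perm (Fin n)) i := by rw [hσ.2]
    simpa using this
  set T := Finset.univ.filter (fun i => i ≤ σ i) with hT
  have hterm : ∀ i ∈ T,
      filldiag (Matrix.diagonal c * A * Matrix.diagonal c)
        ((Matrix.diagonal c).mulVec γ) i (σ i)
      = (c i * filldiag A γ i (σ i)) * (if i ≠ σ i then c (σ i) else 1) := by
    intro i _
    simp only [filldiag, Matrix.of_apply]
    by_cases h : i = σ i
    · rw [if_pos h, if_pos h, if_neg (not_not_intro h), Matrix.mulVec_diagonal]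
      ring
    · rw [if_neg h, if_neg h, if_pos h, Matrix.mul_diagonal, Matrix.diagonal_mul]
  rw [Finset.prod_congr rfl hterm, Finset.prod_mul_distrib, Finset.prod_mul_distrib]
  have h1 : (∏ i ∈ T, (if i ≠ σ i then c (σ i) else 1))
      = ∏ i ∈ Finset.univ.filter (fun i => i < σ i), c (σ i) := by
    rw [hT, Finset.prod_filter, Finset.prod_filter]
    apply Finset.prod_congr rfl
    intro i _
    by_cases hle : i ≤ σ i
    · by_cases heq : i = σ i
      · have hnlt : ¬ i < σ i := by rw [← heq]; exact lt_irrefl i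
        rw [if_pos hle, if_neg (not_not_intro heq), if_neg hnlt]
      · rw [if_pos hle, if_pos heq, if_pos (lt_of_le_of_ne hle heq)]
    · have hnlt : ¬ i < σ i := fun h' => hle h'.le
      simp [hle, hnlt]
  have h2 : (∏ i ∈ Finset.univ.filter (fun i => i < σ i), c (σ i))
      = ∏ j ∈ Finset.univ.filter (fun j => σ j < j), c j := by
    apply Finset.prod_bij' (fun i _ => σ i) (fun j _ => σ j)
    · intro i hi
      rw [Finset.mem_filter] at hi ⊢
      exact ⟨Finset.mem_univ _, by rw [hinv]; exact hi.2⟩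
    · intro j hj
      rw [Finset.mem_filter] at hj ⊢
      exact ⟨Finset.mem_univ _, by rw [hinv]; exact hj.2⟩
    · intro i _; exact hinv i
    · intro j _; exact hinv j
    · intro i _; rfl
  have h3 : (∏ i ∈ T, c i) * (∏ j ∈ Finset.univ.filter (fun j => σ j < j), c j)
      = ∏ i, c i := by
    have hcompl : Finset.univ.filter (fun j => σ j < j)
        = Finset.univ.filter (fun j => ¬ (j ≤ σ j)) := by
      apply Finset.filter_congr
      intro j _
      simp [not_le]
    rw [hT, hcompl, Finset.prod_filter_mul_prod_filter_not]
  rw [h1, h2]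
  rw [show ∀ a b d : ℂ, a * b * d = (a * d) * b by intros; ring]
  rw [h3]

end
end

section
/- (Rearrangement of the generating function.) Let M ≥ 1, let z ∈ ℂ^M and w ∈ ℂ^M with w_i² = z_i for all i; set D := diag(z) ⊕ diag(z), B := diag(w) ⊕ diag(w), and let X be the 2M×2M block matrix [[0, I_M],[I_M, 0]]. Then for every A ∈ ℂ^{2M×2M} and γ ∈ ℂ^{2M}: (i) det(I − X·B·A·B) = det(I − D·X·A); and (ii) if I − D·X·A is invertible, then I − X·B·A·B is invertible and (Bγ)^T (I − X·B·A·B)^{−1} B·X·γ = γ^T (I − D·X·A)^{−1} D·X·γ. -/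
open Matrix

noncomputable section

/-- The swap matrix `X = [[0, I],[I, 0]]`. -/
def Xmat (ι : Type*) [DecidableEq ι] [Fintype ι] (R : Type*) [CommRing R] :
    Matrix (ι ⊕ ι) (ι ⊕ ι) R :=
  Matrix.fromBlocks 0 1 1 0

/-- `D(z) = diag(z) ⊕ diag(z)`. -/
def Dmat {ι : Type*} [DecidableEq ι] {R : Type*} [CommRing R] (z : ι → R) :
    Matrix (ι ⊕ ι) (ι ⊕ ι) R :=
  Matrix.diagonal (Sum.elim z z)

lemma Xmat_comm_Dmat {ι : Type*} [DecidableEq ι] [Fintype ι] {R : Type*} [CommRing R]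
    (w : ι → R) : Xmat ι R * Dmat w = Dmat w * Xmat ι R := by
  ext i j
  rw [Dmat, mul_diagonal, diagonal_mul]
  rcases i with i | i <;> rcases j with j | j <;>
    simp [Xmat, one_apply] <;> split_ifs with h <;> simp [h]

lemma Dmat_mul_Dmat {ι : Type*} [DecidableEq ι] [Fintype ι] {R : Type*} [CommRing R]
    (z w : ι → R) (hw : ∀ i, w i ^ 2 = z i) : Dmat w * Dmat w = Dmat z := by
  rw [Dmat, Dmat, diagonal_mul_diagonal]
  have h : (fun i => Sum.elim w w i * Sum.elim w w i) = Sum.elim z z := by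
    funext i; rcases i with i | i <;> simp [← hw, sq]
  rw [h]

/-- Rearrangement of the generating function: with `w_i² = z_i`, `B = diag(w) ⊕ diag(w)`
and `D = diag(z) ⊕ diag(z)`, (i) `det(I − X·B·A·B) = det(I − D·X·A)`; and (ii) if
`I − D·X·A` is invertible then so is `I − X·B·A·B`, and
`(Bγ)ᵀ (I − X·B·A·B)⁻¹ B·X·γ = γᵀ (I − D·X·A)⁻¹ D·X·γ`. -/
theorem generating_function_rearrangement (M : ℕ) (hM : 1 ≤ M)
    (z w : Fin M → ℂ) (hw : ∀ i, w i ^ 2 = z i)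
    (A : Matrix (Fin M ⊕ Fin M) (Fin M ⊕ Fin M) ℂ) (γ : Fin M ⊕ Fin M → ℂ) :
    (1 - Xmat (Fin M) ℂ * Dmat w * A * Dmat w).det
        = (1 - Dmat z * Xmat (Fin M) ℂ * A).det ∧
      (IsUnit (1 - Dmat z * Xmat (Fin M) ℂ * A) →
        IsUnit (1 - Xmat (Fin M) ℂ * Dmat w * A * Dmat w) ∧
        (Dmat w).mulVec γ ⬝ᵥ
            Matrix.mulVec ((1 - Xmat (Fin M) ℂ * Dmat w * A * Dmat w)⁻¹ *
              (Dmat w * Xmat (Fin M) ℂ)) γ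
          = γ ⬝ᵥ Matrix.mulVec ((1 - Dmat z * Xmat (Fin M) ℂ * A)⁻¹ *
              (Dmat z * Xmat (Fin M) ℂ)) γ) := by
  set X := Xmat (Fin M) ℂ with hXdef
  set B := Dmat w with hBdef
  set D := Dmat z with hDdef
  have hcomm : X * B = B * X := Xmat_comm_Dmat w
  have hsq : B * B = D := Dmat_mul_Dmat z w hw
  have hXD : X * D = D * X := by
    rw [← hsq, ← mul_assoc, hcomm, mul_assoc, hcomm, ← mul_assoc]
  set Mm := 1 - X * B * A * B with hMdef
  set N := 1 - D * X * A with hNdef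
  -- the key intertwining identity
  have hNB : N * B = B * Mm := by
    rw [hMdef, hNdef, sub_mul, mul_sub, one_mul, mul_one]
    congr 1
    calc D * X * A * B = X * D * A * B := by rw [hXD]
      _ = X * (B * B) * A * B := by rw [hsq]
      _ = (X * B) * B * A * B := by rw [mul_assoc X B B]
      _ = B * X * B * A * B := by rw [hcomm]
      _ = B * (X * B * A * B) := by simp only [mul_assoc]
  have hdet : Mm.det = N.det := by
    calc Mm.det = (1 - (X * B * A) * B).det := by rw [hMdef]
      _ = (1 - B * (X * B * A)).det := det_one_sub_mul_comm _ _
      _ = N.det := by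
          congr 2
          calc B * (X * B * A) = (B * X) * B * A := by simp only [mul_assoc]
            _ = (X * B) * B * A := by rw [hcomm]
            _ = X * (B * B) * A := by rw [mul_assoc X B B]
            _ = X * D * A := by rw [hsq]
            _ = D * X * A := by rw [hXD]
  refine ⟨hdet, fun hN => ?_⟩
  have hNd : IsUnit N.det := (isUnit_iff_isUnit_det N).mp hN
  have hMd : IsUnit Mm.det := by rw [hdet]; exact hNd
  have hM : IsUnit Mm := (isUnit_iff_isUnit_det Mm).mpr hMd
  refine ⟨hM, ?_⟩
  -- B * Mm⁻¹ = N⁻¹ * B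
  have hBMinv : B * Mm⁻¹ = N⁻¹ * B := by
    calc B * Mm⁻¹ = N⁻¹ * (N * B) * Mm⁻¹ := by
          rw [← mul_assoc, nonsing_inv_mul N hNd, one_mul]
      _ = N⁻¹ * (B * Mm) * Mm⁻¹ := by rw [hNB]
      _ = N⁻¹ * B * (Mm * Mm⁻¹) := by simp only [mul_assoc]
      _ = N⁻¹ * B := by rw [mul_nonsing_inv Mm hMd, mul_one]
  have hkey : B * (Mm⁻¹ * (B * X)) = N⁻¹ * (D * X) := by
    calc B * (Mm⁻¹ * (B * X)) = (B * Mm⁻¹) * B * X := by simp only [mul_assoc]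
      _ = (N⁻¹ * B) * B * X := by rw [hBMinv]
      _ = N⁻¹ * (B * B) * X := by simp only [mul_assoc]
      _ = N⁻¹ * (D * X) := by rw [hsq, mul_assoc]
  have hBsymm : Bᵀ = B := by rw [hBdef, Dmat, diagonal_transpose]
  calc B.mulVec γ ⬝ᵥ (Mm⁻¹ * (B * X)).mulVec γ
      = (Bᵀ.mulVec γ) ⬝ᵥ (Mm⁻¹ * (B * X)).mulVec γ := by rw [hBsymm]
    _ = (γ ᵥ* B) ⬝ᵥ (Mm⁻¹ * (B * X)).mulVec γ := by rw [mulVec_transpose]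
    _ = γ ⬝ᵥ B.mulVec ((Mm⁻¹ * (B * X)).mulVec γ) := (dotProduct_mulVec _ _ _).symm
    _ = γ ⬝ᵥ (B * (Mm⁻¹ * (B * X))).mulVec γ := by rw [mulVec_mulVec]
    _ = γ ⬝ᵥ (N⁻¹ * (D * X)).mulVec γ := by rw [hkey]

end
end

section
/- Let N ≥ 1 and g : ℕ → ℂ. The coefficient of η^N in the polynomial Σ_{j=0}^N (1/j!) (Σ_{k=1}^N g_k η^k)^j equals Σ_{λ ⊢ N} (1/δ(λ)!) Π_{a∈λ} g_a, the sum over all integer partitions of N. -/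
noncomputable section

/-- `δ(λ)! = Π_k μ_k(λ)!`, the product of the factorials of the multiplicities of the
parts of the partition `λ`. -/
def deltaFac {n : ℕ} (p : n.Partition) : ℕ :=
  ∏ k ∈ p.parts.toFinset, (Multiset.count k p.parts).factorial

/-- The weight `(1/δ(λ)!) Π_{a∈λ} g_a` of a partition `λ`. -/
def partWeight (g : ℕ → ℂ) {n : ℕ} (p : n.Partition) : ℂ :=
  ((deltaFac p : ℂ))⁻¹ * (p.parts.map g).prod

/-!
By the multinomial theorem, `(Σ_{k ∈ [1, N]} g_k η^k)^j` is the sum over multisets `m` of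
size `j` with entries in `[1, N]` of `countPerms m · Π_{a ∈ m} g_a · η^{Σ m}`, and
`countPerms m / j! = 1 / δ(m)!`. The multisets with sum `N` and entries in `[1, N]` are exactly
the parts of the partitions of `N`, and a partition of `N` has at most `N` parts, so truncating
at `j ≤ N` loses nothing.
-/

open Finset Polynomial

namespace Multiset

theorem prod_factorial_count_mul_countPerms {α : Type*} [DecidableEq α] (m : Multiset α) :
    (∏ a ∈ m.toFinset, (m.count a).factorial) * m.countPerms = (card m).factorial := by
  rw [countPerms, Finsupp.multinomial_eq, toFinsupp_support, ← toFinset_sum_count_eq]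
  exact Nat.multinomial_spec _ _

theorem inv_factorial_card_mul_countPerms {α K : Type*} [DecidableEq α] [Field K] [CharZero K]
    (m : Multiset α) :
    ((card m).factorial : K)⁻¹ * m.countPerms =
      ((∏ a ∈ m.toFinset, (m.count a).factorial : ℕ) : K)⁻¹ := by
  rw [← prod_factorial_count_mul_countPerms, Nat.cast_mul, mul_inv, mul_assoc,
    inv_mul_cancel₀ (Nat.cast_ne_zero.2 (Nat.multinomial_pos _ _).ne'), mul_one]

theorem prod_map_C_mul_X_pow {R : Type*} [CommSemiring R] (m : Multiset ℕ) (c : ℕ → R) :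
    (m.map fun i => C (c i) * X ^ i).prod = C (m.map c).prod * X ^ m.sum := by
  induction m using Multiset.induction_on with
  | empty => simp
  | cons a m ih => simp only [map_cons, prod_cons, sum_cons, ih, map_mul, pow_add]; ring

end Multiset

namespace Polynomial

theorem coeff_sum_C_mul_X_pow_pow {R : Type*} [CommSemiring R] (s : Finset ℕ) (c : ℕ → R)
    (j n : ℕ) :
    ((∑ i ∈ s, C (c i) * X ^ i) ^ j).coeff n =
      ∑ m ∈ s.sym j with Multiset.sum (m : Sym ℕ j) = n,
        ((m : Multiset ℕ).countPerms * ((m : Multiset ℕ).map c).prod : R) := by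
  rw [Finset.sum_pow, finsetSum_coeff, sum_filter]
  refine sum_congr rfl fun m _ => ?_
  rw [Multiset.prod_map_C_mul_X_pow, ← C_eq_natCast, ← mul_assoc, ← map_mul,
    coeff_C_mul_X_pow]
  exact if_congr eq_comm rfl rfl

end Polynomial

namespace Nat.Partition

theorem sum_filter_card_parts_eq_sum_sym {M : Type*} [AddCommMonoid M] (n j : ℕ)
    (f : Multiset ℕ → M) :
    ∑ p : n.Partition with Multiset.card p.parts = j, f p.parts =
      ∑ m ∈ (Icc 1 n).sym j with Multiset.sum (m : Sym ℕ j) = n, f m := by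
  refine sum_bij' (fun p hp => Sym.mk p.parts (mem_filter.1 hp).2)
    (fun m hm => ⟨m, fun hi => (mem_Icc.1 (mem_sym_iff.1 (mem_filter.1 hm).1 _ hi)).1,
      (mem_filter.1 hm).2⟩) (fun p _ => ?_) (fun m _ => mem_filter.2 ⟨mem_univ _, m.2⟩)
    (fun _ _ => rfl) (fun _ _ => rfl) (fun _ _ => rfl)
  rw [mem_filter, mem_sym_iff]
  exact ⟨fun i hi => mem_Icc.2 ⟨p.parts_pos hi, p.le_of_mem_parts hi⟩, p.parts_sum⟩

theorem card_parts_le {n : ℕ} (p : n.Partition) : Multiset.card p.parts ≤ n := by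
  simpa [← p.parts_sum] using Multiset.card_nsmul_le_sum fun _ hi => p.parts_pos hi

end Nat.Partition

theorem inv_factorial_mul_coeff_pow_eq_sum_partWeight (N j : ℕ) (g : ℕ → ℂ) :
    (j.factorial : ℂ)⁻¹ * ((∑ k ∈ Icc 1 N, C (g k) * X ^ k) ^ j).coeff N =
      ∑ p : N.Partition with Multiset.card p.parts = j, partWeight g p := by
  rw [coeff_sum_C_mul_X_pow_pow, mul_sum]
  refine (sum_congr rfl fun m _ => ?_).trans (Nat.Partition.sum_filter_card_parts_eq_sum_sym N j
    fun m => ((∏ a ∈ m.toFinset, (m.count a).factorial : ℕ) : ℂ)⁻¹ * (m.map g).prod).symm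
  rw [← mul_assoc, ← Multiset.inv_factorial_card_mul_countPerms, Sym.card_coe]

theorem coeff_eq_sum_over_partitions_general (N : ℕ) (g : ℕ → ℂ) :
    Polynomial.coeff
        (∑ j ∈ Finset.range (N + 1),
          Polynomial.C ((Nat.factorial j : ℂ))⁻¹ *
            (∑ k ∈ Finset.Icc 1 N, Polynomial.C (g k) * Polynomial.X ^ k) ^ j) N
      = ∑ p : N.Partition, partWeight g p := by
  simp_rw [finsetSum_coeff, coeff_C_mul, inv_factorial_mul_coeff_pow_eq_sum_partWeight]
  exact sum_fiberwise_of_maps_to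
    (fun p _ => mem_range.2 (Nat.lt_succ_of_le p.card_parts_le)) _

/-- The coefficient of `η^N` in `Σ_{j=0}^N (1/j!)(Σ_{k=1}^N g_k η^k)^j` equals
`Σ_{λ ⊢ N} (1/δ(λ)!) Π_{a∈λ} g_a`, the sum over all integer partitions of `N`. -/
theorem coeff_eq_sum_over_partitions (N : ℕ) (hN : 1 ≤ N) (g : ℕ → ℂ) :
    Polynomial.coeff
        (∑ j ∈ Finset.range (N + 1),
          Polynomial.C ((Nat.factorial j : ℂ))⁻¹ *
            (∑ k ∈ Finset.Icc 1 N, Polynomial.C (g k) * Polynomial.X ^ k) ^ j) N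
      = ∑ p : N.Partition, partWeight g p :=
  coeff_eq_sum_over_partitions_general N g

end
end
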